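/- arXiv:hep-th/9312193 — 4 statements merged into one kernel-verified Lean document; each statement's English description precedes it below -/
import Mathlib

section
/- Conversely, if w is a holomorphic function on a connected open subset of ℂ with w' never zero and S(w,z) = 0 identically, then w is the restriction of a Möbius transformation: there exist a, b, c, d ∈ ℂ with ad - bc ≠ 0 such that w(z) = (az+b)/(cz+d). -/
/-! The Schwarzian of `w` vanishes exactly when `u = w'` solves `2 u'' u = 3 u'²`. For such `u`
the quotient `u'² / u³` is constant. If it vanishes, `u` is constant and `w` is affine. Otherwise
`u'` never vanishes and `(u / u')' = -1/2`, so `2u = (C - z) u'`; together with `u'² = k u³` this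
forces `u = Δ / (C - z)²`. Finally, a function whose derivative is `Δ / (cz + d)²` differs by a
constant from a Möbius transformation of determinant `Δ`. -/

/-- The Schwarzian derivative `S(w,z) = w'''/w' - (3/2)(w''/w')²`. -/
noncomputable def schwarzian (w : ℂ → ℂ) (z : ℂ) : ℂ :=
  deriv (deriv (deriv w)) z / deriv w z
    - (3 / 2) * (deriv (deriv w) z / deriv w z) ^ 2

theorem IsOpen.exists_eq_const_of_hasDerivAt_zero {𝕜 G : Type*} [RCLike 𝕜]
    [NormedAddCommGroup G] [NormedSpace 𝕜 G] {U : Set 𝕜} (hU : IsOpen U)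
    (hpre : IsPreconnected U) {f : 𝕜 → G} (hf : ∀ z ∈ U, HasDerivAt f 0 z) :
    ∃ a, ∀ z ∈ U, f z = a :=
  hU.exists_is_const_of_deriv_eq_zero hpre
    (fun z hz => (hf z hz).differentiableAt.differentiableWithinAt) fun z hz => (hf z hz).deriv

theorem schwarzian_eq_zero_iff {w : ℂ → ℂ} {z : ℂ} (hw : deriv w z ≠ 0) :
    schwarzian w z = 0 ↔
      2 * deriv (deriv (deriv w)) z * deriv w z = 3 * deriv (deriv w) z ^ 2 := by
  rw [schwarzian, sub_eq_zero]
  field_simp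

theorem exists_mul_sub_mul_eq {K : Type*} [Field K] {c d : K} (hcd : c ≠ 0 ∨ d ≠ 0) (Δ : K) :
    ∃ a b : K, a * d - b * c = Δ := by
  rcases hcd with hc | hd
  · exact ⟨0, -Δ / c, by simp [hc]⟩
  · exact ⟨Δ / d, 0, by simp [hd]⟩

theorem hasDerivAt_moebius {a b c d z : ℂ} (hz : c * z + d ≠ 0) :
    HasDerivAt (fun x => (a * x + b) / (c * x + d)) ((a * d - b * c) / (c * z + d) ^ 2) z := by
  have hnum : HasDerivAt (fun x => a * x + b) a z := by
    simpa using ((hasDerivAt_id z).const_mul a).add_const b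
  have hden : HasDerivAt (fun x => c * x + d) c z := by
    simpa using ((hasDerivAt_id z).const_mul c).add_const d
  exact (hnum.fun_div hden hz).congr_deriv (by ring)

theorem exists_eq_moebius_of_hasDerivAt {U : Set ℂ} (hU : IsOpen U) (hconn : IsConnected U)
    {w : ℂ → ℂ} {Δ c d : ℂ} (hden : ∀ z ∈ U, c * z + d ≠ 0)
    (hw : ∀ z ∈ U, HasDerivAt w (Δ / (c * z + d) ^ 2) z) :
    ∃ a b, a * d - b * c = Δ ∧ ∀ z ∈ U, w z = (a * z + b) / (c * z + d) := by
  obtain ⟨z₀, hz₀⟩ := hconn.nonempty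
  have hcd : c ≠ 0 ∨ d ≠ 0 := by
    by_contra! h
    exact hden z₀ hz₀ (by simp [h.1, h.2])
  obtain ⟨a, b, hab⟩ := exists_mul_sub_mul_eq hcd Δ
  obtain ⟨e, he⟩ : ∃ e, ∀ z ∈ U, w z - (a * z + b) / (c * z + d) = e := by
    refine hU.exists_eq_const_of_hasDerivAt_zero hconn.isPreconnected fun z hz => ?_
    simpa [hab] using (hw z hz).fun_sub (hasDerivAt_moebius (a := a) (b := b) (hden z hz))
  refine ⟨a + e * c, b + e * d, by rw [← hab]; ring, fun z hz => ?_⟩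
  rw [eq_div_iff (hden z hz), ← he z hz]
  field_simp [hden z hz]
  ring

section MoebiusDerivative

variable {U : Set ℂ} {u : ℂ → ℂ}

theorem exists_sq_deriv_eq_mul_pow_three (hU : IsOpen U) (hpre : IsPreconnected U)
    (hu : AnalyticOnNhd ℂ u U) (hu0 : ∀ z ∈ U, u z ≠ 0)
    (hode : ∀ z ∈ U, 2 * deriv (deriv u) z * u z = 3 * deriv u z ^ 2) :
    ∃ k, ∀ z ∈ U, deriv u z ^ 2 = k * u z ^ 3 := by
  obtain ⟨k, hk⟩ : ∃ k, ∀ z ∈ U, deriv u z ^ 2 / u z ^ 3 = k := by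
    refine hU.exists_eq_const_of_hasDerivAt_zero hpre fun z hz => ?_
    have hnum := ((hu.deriv z hz).differentiableAt.hasDerivAt).fun_pow 2
    have hden := ((hu z hz).differentiableAt.hasDerivAt).fun_pow 3
    refine (hnum.fun_div hden (pow_ne_zero 3 (hu0 z hz))).congr_deriv ?_
    rw [div_eq_zero_iff]
    left
    linear_combination (deriv u z * u z ^ 2) * hode z hz
  exact ⟨k, fun z hz => by rw [← hk z hz, div_mul_cancel₀ _ (pow_ne_zero 3 (hu0 z hz))]⟩

theorem exists_two_mul_eq_sub_mul_deriv (hU : IsOpen U) (hpre : IsPreconnected U)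
    (hu : AnalyticOnNhd ℂ u U) (hu'0 : ∀ z ∈ U, deriv u z ≠ 0)
    (hode : ∀ z ∈ U, 2 * deriv (deriv u) z * u z = 3 * deriv u z ^ 2) :
    ∃ C, ∀ z ∈ U, 2 * u z = (C - z) * deriv u z := by
  obtain ⟨c, hc⟩ : ∃ c, ∀ z ∈ U, u z / deriv u z + z / 2 = c := by
    refine hU.exists_eq_const_of_hasDerivAt_zero hpre fun z hz => ?_
    have hquot := ((hu z hz).differentiableAt.hasDerivAt).fun_div
      ((hu.deriv z hz).differentiableAt.hasDerivAt) (hu'0 z hz)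
    refine (hquot.fun_add ((hasDerivAt_id z).div_const 2)).congr_deriv ?_
    field_simp [hu'0 z hz]
    linear_combination -hode z hz
  refine ⟨2 * c, fun z hz => ?_⟩
  rw [← hc z hz]
  field_simp [hu'0 z hz]
  ring

theorem exists_eq_div_sq_of_two_mul_deriv_deriv_mul_eq (hU : IsOpen U) (hconn : IsConnected U)
    (hu : AnalyticOnNhd ℂ u U) (hu0 : ∀ z ∈ U, u z ≠ 0)
    (hode : ∀ z ∈ U, 2 * deriv (deriv u) z * u z = 3 * deriv u z ^ 2) :
    ∃ Δ c d : ℂ, Δ ≠ 0 ∧ (∀ z ∈ U, c * z + d ≠ 0) ∧ ∀ z ∈ U, u z = Δ / (c * z + d) ^ 2 := by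
  have hpre := hconn.isPreconnected
  obtain ⟨z₀, hz₀⟩ := hconn.nonempty
  obtain ⟨k, hk⟩ := exists_sq_deriv_eq_mul_pow_three hU hpre hu hu0 hode
  by_cases hk0 : k = 0
  · obtain ⟨Δ, hΔ⟩ := hU.exists_is_const_of_deriv_eq_zero hpre hu.differentiableOn
      fun z hz => by simpa [hk0] using hk z hz
    exact ⟨Δ, 0, 1, hΔ z₀ hz₀ ▸ hu0 z₀ hz₀, by simp, by simpa using hΔ⟩
  have hu'0 : ∀ z ∈ U, deriv u z ≠ 0 := fun z hz h => by
    simpa [h, hk0, hu0 z hz] using hk z hz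
  obtain ⟨C, hC⟩ := exists_two_mul_eq_sub_mul_deriv hU hpre hu hu'0 hode
  have hCz : ∀ z ∈ U, -1 * z + C ≠ 0 := fun z hz h => by
    have h2 := hC z hz
    rw [show C - z = 0 by linear_combination h, zero_mul] at h2
    exact hu0 z hz (by linear_combination h2 / 2)
  refine ⟨4 / k, -1, C, by simp [hk0], hCz, fun z hz => ?_⟩
  -- `4 u² = (C - z)² u'² = (C - z)² k u³`; cancel `u²`.
  have h4 : u z ^ 2 * (4 - k * (C - z) ^ 2 * u z) = 0 := by
    linear_combination (2 * u z + (C - z) * deriv u z) * hC z hz + (C - z) ^ 2 * hk z hz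
  have h4' := (mul_eq_zero.1 h4).resolve_left (pow_ne_zero 2 (hu0 z hz))
  rw [eq_div_iff (pow_ne_zero 2 (hCz z hz)), eq_div_iff hk0]
  linear_combination -h4'

end MoebiusDerivative

/-- A holomorphic function on a connected open set with nonvanishing derivative
and identically vanishing Schwarzian derivative is the restriction of a
Möbius transformation. -/
theorem vanishing_schwarzian_implies_moebius
    (U : Set ℂ) (hU : IsOpen U) (hconn : IsConnected U)
    (w : ℂ → ℂ) (hw : DifferentiableOn ℂ w U)
    (hw' : ∀ z ∈ U, deriv w z ≠ 0)
    (hS : ∀ z ∈ U, schwarzian w z = 0) :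
    ∃ a b c d : ℂ, a * d - b * c ≠ 0 ∧
      ∀ z ∈ U, w z = (a * z + b) / (c * z + d) := by
  have hu : AnalyticOnNhd ℂ (deriv w) U := (hw.analyticOnNhd hU).deriv
  obtain ⟨Δ, c, d, hΔ, hden, hu_eq⟩ := exists_eq_div_sq_of_two_mul_deriv_deriv_mul_eq hU hconn hu
    hw' fun z hz => (schwarzian_eq_zero_iff (hw' z hz)).1 (hS z hz)
  obtain ⟨a, b, hab, hwab⟩ := exists_eq_moebius_of_hasDerivAt hU hconn hden fun z hz =>
    hu_eq z hz ▸ (hw.differentiableAt (hU.mem_nhds hz)).hasDerivAt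
  exact ⟨a, b, c, d, hab ▸ hΔ, hwab⟩
end

section
/- The transition function x_α = Z + ln(e^{x_β} + 1), where Z ∈ ℂ has Im Z > 0 and the branch of logarithm is chosen with imaginary part in (-π, Im Z), maps the strip {x : -π < Im x < 0} holomorphically into the strip {x : -π < Im x < Im Z}, and satisfies Im x_α > Im Z + Im x_β for all x_β in the domain. -/
open Complex

/-! On the strip, `w = eˣ` lies in the lower half-plane with `arg w = Im x`. Adding `1` turns
`w` counterclockwise without leaving the lower half-plane, so
`Im x < arg (eˣ + 1) < 0`; since `Im (Z + log (eˣ + 1)) = Im Z + arg (eˣ + 1)`, all three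
inequalities follow, and `eˣ + 1` stays off the branch cut of `log`. -/

namespace Complex

lemma exp_im_neg {x : ℂ} (h₁ : -Real.pi < x.im) (h₂ : x.im < 0) : (exp x).im < 0 := by
  rw [exp_im]
  exact mul_neg_of_pos_of_neg (Real.exp_pos _) (Real.sin_neg_of_neg_of_neg_pi_lt h₂ h₁)

lemma arg_lt_arg_add_ofReal {w : ℂ} (hw : w.im < 0) {r : ℝ} (hr : 0 < r) :
    arg w < arg (w + r) := by
  have hw0 : w ≠ 0 := fun h => by simp [h] at hw
  -- `w + r = w * u` with `u` in the upper half-plane, so `arg u ∈ (0, π]` is added to `arg w`.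
  set u : ℂ := 1 + r * w⁻¹ with hu_def
  have hu_im : 0 < u.im := by
    have : u.im = r * (-w.im / normSq w) := by simp [u, inv_im, neg_div]
    rw [this]
    exact mul_pos hr (div_pos (neg_pos.2 hw) (normSq_pos.2 hw0))
  have hu0 : u ≠ 0 := fun h => by simp [h] at hu_im
  have harg_u : 0 < arg u := (arg_nonneg_iff.2 hu_im.le).lt_of_ne fun h =>
    hu_im.ne' (arg_eq_zero_iff.1 h.symm).2
  have hmul : w * u = w + r := by
    rw [hu_def, mul_add, mul_one, mul_left_comm, mul_inv_cancel₀ hw0, mul_one]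
  have hsum : arg w + arg u ∈ Set.Ioc (-Real.pi) Real.pi :=
    ⟨by linarith [neg_pi_lt_arg w], by linarith [arg_neg_iff.2 hw, arg_le_pi u]⟩
  rw [← hmul, arg_mul hw0 hu0 hsum]
  linarith

end Complex

/-- The transition function `x ↦ Z + log(eˣ + 1)` (principal branch) maps the
strip `-π < Im x < 0` holomorphically into the strip `-π < Im x < Im Z`, and
satisfies `Im f(x) > Im Z + Im x` there. -/
theorem transition_function_strip (Z : ℂ) (hZ : 0 < Z.im) :
    DifferentiableOn ℂ (fun x => Z + Complex.log (Complex.exp x + 1))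
      {x : ℂ | -Real.pi < x.im ∧ x.im < 0} ∧
    ∀ x : ℂ, -Real.pi < x.im → x.im < 0 →
      (-Real.pi < (Z + Complex.log (Complex.exp x + 1)).im ∧
       (Z + Complex.log (Complex.exp x + 1)).im < Z.im ∧
       Z.im + x.im < (Z + Complex.log (Complex.exp x + 1)).im) := by
  have him_neg {x : ℂ} (h₁ : -Real.pi < x.im) (h₂ : x.im < 0) : (exp x + 1).im < 0 := by
    simpa using exp_im_neg h₁ h₂
  refine ⟨fun x ⟨h₁, h₂⟩ => ?_, fun x h₁ h₂ => ?_⟩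
  · have hslit : exp x + 1 ∈ slitPlane := mem_slitPlane_iff.2 (Or.inr (him_neg h₁ h₂).ne)
    exact (((differentiableAt_log hslit).comp x
      ((differentiable_exp x).add_const 1)).const_add Z).differentiableWithinAt
  · have harg_exp : arg (exp x) = x.im := by
      rw [← log_im, log_exp h₁ (h₂.le.trans Real.pi_pos.le)]
    have hlower : x.im < arg (exp x + 1) := by
      simpa [harg_exp] using arg_lt_arg_add_ofReal (exp_im_neg h₁ h₂) one_pos
    have hupper : arg (exp x + 1) < 0 := arg_neg_iff.2 (him_neg h₁ h₂)
    simp only [add_im, log_im]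
    exact ⟨by linarith, by linarith, by linarith⟩
end

section
/- Combining the transition function with orientation reversal: if x_α = Z_α + ln(e^{x_β}+1) with the branch as above, then under the substitution x_β ↦ Z_β - iπ - x_β one obtains the identity x_α = Z_α - ln(e^{-x_β} + 1) (for the appropriate branch), and in this case also Im x_α > Im Z_α + Im x_β. -/
open Complex Real

/-! Writing `w = e^{-x}`, the strip `-π < Im x < 0` puts `w` in the upper half plane with
`arg w = -Im x`. Since `w + 1 = w (1 + w⁻¹)` and `1 + w⁻¹` lies in the lower half plane, the
principal arguments add without wrapping around, so `arg (w + 1) < arg w`, which is the inequality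
`Im (Z - log (w + 1)) > Im Z + Im x`. -/

namespace Complex

theorem exp_sub_log_mul_self (z : ℂ) {w : ℂ} (hw : w ≠ 0) : exp (z - log w) * w = exp z := by
  rw [exp_sub, exp_log hw, div_mul_cancel₀ _ hw]

theorem im_exp_pos {z : ℂ} (h₀ : 0 < z.im) (hπ : z.im < π) : 0 < (exp z).im := by
  rw [exp_im]
  exact mul_pos (Real.exp_pos _) (Real.sin_pos_of_pos_of_lt_pi h₀ hπ)

theorem arg_add_one_lt_arg {w : ℂ} (hw : 0 < w.im) : arg (w + 1) < arg w := by
  have hw₀ : w ≠ 0 := fun h => by simp [h] at hw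
  set u := 1 + w⁻¹
  have hu : u.im < 0 := by
    simp only [u, add_im, one_im, inv_im, zero_add, neg_div]
    exact neg_neg_of_pos (div_pos hw (normSq_pos.mpr hw₀))
  have hu₀ : u ≠ 0 := fun h => by simp [h] at hu
  have harg_u : arg u < 0 := arg_neg_iff.mpr hu
  have harg_w : 0 ≤ arg w := arg_nonneg_iff.mpr hw.le
  have hmul : w * u = w + 1 := by simp only [u, mul_add, mul_one, mul_inv_cancel₀ hw₀, add_comm]
  have hsum : arg (w * u) = arg w + arg u :=
    arg_mul hw₀ hu₀ ⟨by linarith [neg_pi_lt_arg u], by linarith [arg_le_pi w]⟩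
  rw [← hmul, hsum]
  linarith

theorem im_log_exp_add_one_lt {z : ℂ} (h₀ : 0 < z.im) (hπ : z.im < π) :
    (log (exp z + 1)).im < z.im := by
  have harg : arg (exp z) = z.im := by
    rw [← log_im, log_exp (by linarith [Real.pi_pos]) hπ.le]
  rw [log_im, ← harg]
  exact arg_add_one_lt_arg (im_exp_pos h₀ hπ)

end Complex

theorem reversed_transition_function_general (Z : ℂ) :
    ∀ x : ℂ, -Real.pi < x.im → x.im < 0 →
      (Complex.exp (Z - Complex.log (Complex.exp (-x) + 1))
          * (Complex.exp (-x) + 1) = Complex.exp Z) ∧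
      Z.im + x.im < (Z - Complex.log (Complex.exp (-x) + 1)).im := by
  intro x hlo hhi
  have h₀ : 0 < (-x).im := by rw [neg_im]; linarith
  have hπ : (-x).im < π := by rw [neg_im]; linarith
  have hw : (exp (-x) + 1).im ≠ 0 := by
    rw [add_im, one_im, add_zero]; exact (im_exp_pos h₀ hπ).ne'
  refine ⟨exp_sub_log_mul_self Z fun h => hw (by rw [h, zero_im]), ?_⟩
  have hlog := im_log_exp_add_one_lt h₀ hπ
  rw [neg_im] at hlog
  rw [sub_im]
  linarith

/-- After orientation reversal the transition function takes the form
`x_α = Z_α - log(e^{-x_β} + 1)`; this satisfies the multiplicative identity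
`e^{x_α}·(e^{-x_β}+1) = e^{Z_α}` and the inequality
`Im x_α > Im Z_α + Im x_β`. -/
theorem reversed_transition_function (Z : ℂ) (hZ : 0 < Z.im) :
    ∀ x : ℂ, -Real.pi < x.im → x.im < 0 →
      (Complex.exp (Z - Complex.log (Complex.exp (-x) + 1))
          * (Complex.exp (-x) + 1) = Complex.exp Z) ∧
      Z.im + x.im < (Z - Complex.log (Complex.exp (-x) + 1)).im :=
  reversed_transition_function_general Z
end

section
/- If Z₁, ..., Z_n ∈ ℂ satisfy Z₁ + ⋯ + Z_n = 2πi and e^{Z₁} + e^{Z₁+Z₂} + ⋯ + e^{Z₁+⋯+Z_n} = 0, then the product of matrices h(Z_n)·s·h(Z_{n-1})·s⋯h(Z₁)·s around the corresponding face is a scalar matrix, i.e., the monodromy of the flat PGL(2,ℂ) connection around that face is trivial (here s = [[1,1],[-1,0]], h(Z)=[[-1,-1],[e^Z+1,1]]). -/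
open Finset

/-- The short-edge matrix `s = [[1,1],[-1,0]]`. -/
def sMat : Matrix (Fin 2) (Fin 2) ℂ := !![1, 1; -1, 0]

/-- The edge matrix `h(Z) = [[-1,-1],[e^Z+1,1]]`. -/
noncomputable def hMat (Z : ℂ) : Matrix (Fin 2) (Fin 2) ℂ :=
  !![-1, -1; Complex.exp Z + 1, 1]

/-!
Peeling off `Z₁` and inducting on `n`, the monodromy is
`[[e^{Z₁+⋯+Z_n} - S, e^{Z₁+⋯+Z_n} - S - 1], [S, S + 1]]` with `S = Σ_k e^{Z₁+⋯+Z_k}`.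
The two hypotheses say exactly that `e^{Z₁+⋯+Z_n} = 1` and `S = 0`, so the monodromy is `1`.
-/

open Complex

theorem Fin.sum_Iic_succ {M : Type*} [AddCommMonoid M] {n : ℕ} (f : Fin (n + 1) → M)
    (i : Fin n) : ∑ j ∈ Iic i.succ, f j = f 0 + ∑ j ∈ Iic i, f j.succ := by
  rw [← Icc_bot, bot_eq_zero, Icc_eq_cons_Ioc (Fin.zero_le _), Finset.sum_cons,
    ← Fin.map_succEmb_Iic, sum_map]
  rfl

noncomputable def prefixExpSum {n : ℕ} (Z : Fin n → ℂ) : ℂ :=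
  ∑ i, exp (∑ j ∈ Iic i, Z j)

theorem prefixExpSum_succ {n : ℕ} (Z : Fin (n + 1) → ℂ) :
    prefixExpSum Z = exp (Z 0) * (1 + prefixExpSum fun i => Z i.succ) := by
  simp only [prefixExpSum, Fin.sum_univ_succ, Fin.sum_Iic_succ, exp_add, mul_add, mul_sum]
  rw [← bot_eq_zero, Iic_bot, sum_singleton, mul_one]

noncomputable def faceMonodromy {n : ℕ} (Z : Fin n → ℂ) : Matrix (Fin 2) (Fin 2) ℂ :=
  (List.ofFn fun i => hMat (Z i) * sMat).reverse.prod

theorem faceMonodromy_succ {n : ℕ} (Z : Fin (n + 1) → ℂ) :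
    faceMonodromy Z = faceMonodromy (fun i => Z i.succ) * (hMat (Z 0) * sMat) := by
  simp [faceMonodromy, List.ofFn_succ]

theorem faceMonodromy_eq {n : ℕ} (Z : Fin n → ℂ) :
    faceMonodromy Z =
      !![exp (∑ i, Z i) - prefixExpSum Z, exp (∑ i, Z i) - prefixExpSum Z - 1;
        prefixExpSum Z, prefixExpSum Z + 1] := by
  induction n with
  | zero => simp [faceMonodromy, prefixExpSum, Matrix.one_fin_two]
  | succ n ih =>
    rw [faceMonodromy_succ, ih, prefixExpSum_succ, Fin.sum_univ_succ, exp_add, hMat, sMat,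
      Matrix.mul_fin_two, Matrix.mul_fin_two]
    congr 1
    ring_nf

/-- If `Z₁ + ⋯ + Z_n = 2πi` and `Σ_k e^{Z₁+⋯+Z_k} = 0`, then the monodromy
`h(Z_n)·s ⋯ h(Z₁)·s` around the corresponding face is a nonzero scalar matrix,
i.e. trivial in `PGL(2, ℂ)`. -/
theorem face_monodromy_trivial (n : ℕ) (Z : Fin n → ℂ)
    (hsum : ∑ i, Z i = 2 * Real.pi * Complex.I)
    (hexp : ∑ i : Fin n, Complex.exp (∑ j ∈ Finset.Iic i, Z j) = 0) :
    ∃ c : ℂ, c ≠ 0 ∧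
      (List.ofFn fun i : Fin n => hMat (Z i) * sMat).reverse.prod
        = c • (1 : Matrix (Fin 2) (Fin 2) ℂ) := by
  refine ⟨1, one_ne_zero, ?_⟩
  have hS : prefixExpSum Z = 0 := hexp
  rw [one_smul, ← faceMonodromy, faceMonodromy_eq, hS, hsum, exp_two_pi_mul_I,
    Matrix.one_fin_two]
  norm_num
end
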